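/- arXiv:math/0505006 — 2 statements merged into one kernel-verified Lean document; each statement's English description precedes it below -/
import Mathlib

section
/- Let ν and t be unit vectors in ℝ³ with angle θ between them (cos θ = ν·t). Among all symmetric 3×3 matrices σ satisfying σν = t, the minimal Frobenius norm is √(1 + sin²θ), attained by σ = cosθ ν⊗ν + sinθ (ν⊗f + f⊗ν), where f is the unit vector in the direction of the tangential component of t (any unit vector orthogonal to ν if t is parallel to ν). -/
/-!
Write `M = c ν⊗ν + s (ν⊗f + f⊗ν)`. For symmetric `σ` the Frobenius pairing
`⟨σ, M⟩ = c (ν ⬝ σν) + 2 s (f ⬝ σν)` depends on `σ` only through `σν`, so every admissible `σ`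
(including `M` itself) has `⟨σ, M⟩ = c² + 2s² = ‖M‖²`. Hence `σ - M ⊥ M`, and Pythagoras gives
`‖σ‖² = ‖σ - M‖² + ‖M‖² ≥ ‖M‖² = 1 + s²`, using `c² + s² = ‖t‖² = 1`.
-/

open Matrix

section General

variable {m n R : Type*} [Fintype m] [Fintype n]

theorem sum_sum_sq_le_of_sum_sum_mul_eq {A B : Matrix m n ℝ}
    (h : ∑ i, ∑ j, A i j * B i j = ∑ i, ∑ j, B i j ^ 2) :
    ∑ i, ∑ j, B i j ^ 2 ≤ ∑ i, ∑ j, A i j ^ 2 := by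
  have hdist : 0 ≤ ∑ i, ∑ j, (A i j - B i j) ^ 2 := by positivity
  have hexpand : ∑ i, ∑ j, (A i j - B i j) ^ 2
      = ∑ i, ∑ j, A i j ^ 2 - 2 * ∑ i, ∑ j, A i j * B i j + ∑ i, ∑ j, B i j ^ 2 := by
    simp only [sub_sq, Finset.sum_add_distrib, Finset.sum_sub_distrib, Finset.mul_sum, mul_assoc]
  linarith

variable [CommSemiring R]

theorem sum_sum_mul_mul_eq_dotProduct_mulVec (σ : Matrix m n R) (u : m → R) (w : n → R) :
    ∑ i, ∑ j, σ i j * (u i * w j) = u ⬝ᵥ σ *ᵥ w := by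
  simp only [dotProduct, mulVec, Finset.mul_sum]
  exact Finset.sum_congr rfl fun i _ => Finset.sum_congr rfl fun j _ => by ring

theorem Matrix.IsSymm.dotProduct_mulVec_comm {σ : Matrix n n R} (hσ : σ.IsSymm) (u w : n → R) :
    u ⬝ᵥ σ *ᵥ w = w ⬝ᵥ σ *ᵥ u := by
  rw [dotProduct_mulVec, ← mulVec_transpose, hσ.eq, dotProduct_comm]

theorem dotProduct_smul_add_smul_self {ν f : n → R} (hν : ν ⬝ᵥ ν = 1) (hf : f ⬝ᵥ f = 1)
    (hνf : ν ⬝ᵥ f = 0) (c s : R) :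
    (c • ν + s • f) ⬝ᵥ (c • ν + s • f) = c ^ 2 + s ^ 2 := by
  simp only [dotProduct_add, add_dotProduct, dotProduct_smul, smul_dotProduct, smul_eq_mul,
    hν, hf, hνf, dotProduct_comm f ν]
  ring

end General

section MinimalStress

variable {ι R : Type*} [CommSemiring R]

/-- `c ν⊗ν + s (ν⊗f + f⊗ν)`. -/
def minimalStress (c s : R) (ν f : ι → R) : Matrix ι ι R :=
  Matrix.of fun i j => c * ν i * ν j + s * (ν i * f j + f i * ν j)

theorem minimalStress_isSymm (c s : R) (ν f : ι → R) : (minimalStress c s ν f).IsSymm := by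
  ext i j
  simp only [minimalStress, transpose_apply, of_apply]
  ring

variable [Fintype ι]

theorem minimalStress_mulVec {ν f : ι → R} (hν : ν ⬝ᵥ ν = 1) (hνf : ν ⬝ᵥ f = 0) (c s : R) :
    minimalStress c s ν f *ᵥ ν = c • ν + s • f := by
  ext i
  have hexpand : (minimalStress c s ν f *ᵥ ν) i
      = c * ν i * (ν ⬝ᵥ ν) + s * ν i * (ν ⬝ᵥ f) + s * f i * (ν ⬝ᵥ ν) := by
    simp only [mulVec, dotProduct, minimalStress, of_apply, Finset.mul_sum,
      ← Finset.sum_add_distrib]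
    exact Finset.sum_congr rfl fun j _ => by ring
  rw [hexpand, hν, hνf]
  simp

theorem sum_sum_mul_minimalStress {σ : Matrix ι ι R} (hσ : σ.IsSymm) (c s : R) (ν f : ι → R) :
    ∑ i, ∑ j, σ i j * minimalStress c s ν f i j
      = c * (ν ⬝ᵥ σ *ᵥ ν) + 2 * s * (f ⬝ᵥ σ *ᵥ ν) := by
  have hsplit : ∑ i, ∑ j, σ i j * minimalStress c s ν f i j
      = c * ∑ i, ∑ j, σ i j * (ν i * ν j) + s * ∑ i, ∑ j, σ i j * (ν i * f j)
        + s * ∑ i, ∑ j, σ i j * (f i * ν j) := by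
    simp only [minimalStress, of_apply, Finset.mul_sum, ← Finset.sum_add_distrib]
    exact Finset.sum_congr rfl fun i _ => Finset.sum_congr rfl fun j _ => by ring
  rw [hsplit, sum_sum_mul_mul_eq_dotProduct_mulVec, sum_sum_mul_mul_eq_dotProduct_mulVec,
    sum_sum_mul_mul_eq_dotProduct_mulVec, hσ.dotProduct_mulVec_comm ν f]
  ring

theorem sum_sum_mul_minimalStress_of_mulVec_eq {ν f : ι → R} (hν : ν ⬝ᵥ ν = 1)
    (hf : f ⬝ᵥ f = 1) (hνf : ν ⬝ᵥ f = 0) {c s : R} {σ : Matrix ι ι R} (hσ : σ.IsSymm)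
    (hσν : σ *ᵥ ν = c • ν + s • f) :
    ∑ i, ∑ j, σ i j * minimalStress c s ν f i j = c ^ 2 + 2 * s ^ 2 := by
  rw [sum_sum_mul_minimalStress hσ, hσν]
  simp only [dotProduct_add, dotProduct_smul, smul_eq_mul, hν, hf, hνf, dotProduct_comm f ν]
  ring

end MinimalStress

theorem stmt10_general (ν t f : Fin 3 → ℝ)
    (hν : ∑ i, ν i ^ 2 = 1) (ht : ∑ i, t i ^ 2 = 1) (hf : ∑ i, f i ^ 2 = 1)
    (horth : ∑ i, ν i * f i = 0)
    (c s : ℝ)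
    (hdecomp : ∀ i, t i = c * ν i + s * f i) :
    IsLeast {r | ∃ σ : Matrix (Fin 3) (Fin 3) ℝ, σ.IsSymm ∧ σ.mulVec ν = t ∧
        r = Real.sqrt (∑ i, ∑ j, σ i j ^ 2)} (Real.sqrt (1 + s ^ 2)) ∧
    (Matrix.of fun i j => c * ν i * ν j + s * (ν i * f j + f i * ν j)).mulVec ν = t ∧
    Real.sqrt (∑ i, ∑ j, (c * ν i * ν j + s * (ν i * f j + f i * ν j)) ^ 2)
      = Real.sqrt (1 + s ^ 2) := by
  have hνν : ν ⬝ᵥ ν = 1 := by simpa only [dotProduct, sq] using hν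
  have hff : f ⬝ᵥ f = 1 := by simpa only [dotProduct, sq] using hf
  have ht_eq : t = c • ν + s • f := funext fun i => by simp [hdecomp]
  have hcs : c ^ 2 + s ^ 2 = 1 := by
    rw [← dotProduct_smul_add_smul_self hνν hff horth, ← ht_eq, ← ht]
    simp only [dotProduct, sq]
  have hMν : minimalStress c s ν f *ᵥ ν = t := by rw [minimalStress_mulVec hνν horth, ht_eq]
  have hMnorm : ∑ i, ∑ j, minimalStress c s ν f i j ^ 2 = 1 + s ^ 2 := by
    simp only [sq (minimalStress c s ν f _ _)]
    rw [sum_sum_mul_minimalStress_of_mulVec_eq hνν hff horth (minimalStress_isSymm c s ν f)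
      (hMν.trans ht_eq)]
    linarith
  refine ⟨⟨⟨_, minimalStress_isSymm c s ν f, hMν, by rw [hMnorm]⟩, ?_⟩, hMν,
    congrArg Real.sqrt hMnorm⟩
  rintro r ⟨σ, hσ, hσν, rfl⟩
  gcongr
  rw [← hMnorm]
  apply sum_sum_sq_le_of_sum_sum_mul_eq
  rw [sum_sum_mul_minimalStress_of_mulVec_eq hνν hff horth hσ (hσν.trans ht_eq), hMnorm]
  linarith

/-- Let `ν, t` be unit vectors in `ℝ³` with `cos θ = ν·t`, `sin θ = √(1−cos²θ)`, and let
`f` be the unit vector in the direction of the tangential component of `t` (any unit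
vector orthogonal to `ν` if `t ∥ ν`), so that `t = cosθ ν + sinθ f`.  Among all symmetric
`3×3` matrices `σ` with `σν = t`, the minimal Frobenius norm is `√(1 + sin²θ)`, and it is
attained by `σ = cosθ ν⊗ν + sinθ (ν⊗f + f⊗ν)`. -/
theorem stmt10 (ν t f : Fin 3 → ℝ)
    (hν : ∑ i, ν i ^ 2 = 1) (ht : ∑ i, t i ^ 2 = 1) (hf : ∑ i, f i ^ 2 = 1)
    (horth : ∑ i, ν i * f i = 0)
    (c s : ℝ) (hc : c = ∑ i, ν i * t i) (hs : s = Real.sqrt (1 - c ^ 2))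
    (hdecomp : ∀ i, t i = c * ν i + s * f i) :
    IsLeast {r | ∃ σ : Matrix (Fin 3) (Fin 3) ℝ, σ.IsSymm ∧ σ.mulVec ν = t ∧
        r = Real.sqrt (∑ i, ∑ j, σ i j ^ 2)} (Real.sqrt (1 + s ^ 2)) ∧
    (Matrix.of fun i j => c * ν i * ν j + s * (ν i * f j + f i * ν j)).mulVec ν = t ∧
    Real.sqrt (∑ i, ∑ j, (c * ν i * ν j + s * (ν i * f j + f i * ν j)) ^ 2)
      = Real.sqrt (1 + s ^ 2) :=
  stmt10_general ν t f hν ht hf horth c s hdecomp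
end

section
/- The supremum over unit vectors t ∈ ℝ³ of the minimal Frobenius norm of a symmetric matrix σ with σν = t (ν a fixed unit vector) equals √2, attained when t is perpendicular to ν. -/
/-!
For a unit vector `ν`, the symmetric matrix `σ₀ = t νᵀ + ν tᵀ - (t ⬝ ν) ν νᵀ` maps `ν` to `t`, and
its Frobenius inner product with *every* symmetric `σ` satisfying `σ ν = t` is the same number
`2 |t|² - (t ⬝ ν)²`. Hence `|σ|² = |σ₀|² + |σ - σ₀|² ≥ 2 |t|² - (t ⬝ ν)²`, with equality at `σ₀`.
For unit `t` the minimal norm is `√(2 - (t ⬝ ν)²) ≤ √2`, with equality exactly when `t ⟂ ν`, and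
such `t` exist as soon as the dimension is at least two.
-/

open Matrix

namespace Matrix

section General

variable {m n R : Type*} [Fintype n]

lemma vecMulVec_mulVec_eq_smul [CommSemiring R] (u : m → R) (v w : n → R) :
    vecMulVec u v *ᵥ w = (v ⬝ᵥ w) • u := by
  rw [vecMulVec_mulVec, op_smul_eq_smul]

lemma sum_sum_vecMulVec_mul [Fintype m] [CommSemiring R] (u : m → R) (v : n → R) (B : Matrix m n R) :
    ∑ i, ∑ j, vecMulVec u v i j * B i j = u ⬝ᵥ B *ᵥ v := by
  simp only [vecMulVec_apply, dotProduct, mulVec, Finset.mul_sum]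
  exact Finset.sum_congr rfl fun i _ => Finset.sum_congr rfl fun j _ => by ring

lemma sum_sum_sq_sub [Fintype m] [CommRing R] (A B : Matrix m n R) :
    ∑ i, ∑ j, (A i j - B i j) ^ 2 =
      ∑ i, ∑ j, A i j ^ 2 - 2 * ∑ i, ∑ j, B i j * A i j + ∑ i, ∑ j, B i j ^ 2 := by
  simp only [Finset.mul_sum, ← Finset.sum_sub_distrib, ← Finset.sum_add_distrib]
  exact Finset.sum_congr rfl fun i _ => Finset.sum_congr rfl fun j _ => by ring

lemma sum_sq_eq_dotProduct_self [CommSemiring R] (v : n → R) : ∑ i, v i ^ 2 = v ⬝ᵥ v := by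
  simp only [dotProduct, sq]

end General

variable {ι : Type*} [Fintype ι]

noncomputable def minNormSymmSolution (ν t : ι → ℝ) : Matrix ι ι ℝ :=
  vecMulVec t ν + vecMulVec ν t - (t ⬝ᵥ ν) • vecMulVec ν ν

variable {ν t : ι → ℝ}

lemma isSymm_minNormSymmSolution (ν t : ι → ℝ) : (minNormSymmSolution ν t).IsSymm := by
  refine IsSymm.ext fun i j => ?_
  simp only [minNormSymmSolution, sub_apply, add_apply, smul_apply, vecMulVec_apply, smul_eq_mul]
  ring

lemma minNormSymmSolution_mulVec (hν : ν ⬝ᵥ ν = 1) : minNormSymmSolution ν t *ᵥ ν = t := by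
  simp only [minNormSymmSolution, sub_mulVec, add_mulVec, smul_mulVec, vecMulVec_mulVec_eq_smul,
    hν, one_smul]
  abel

lemma sum_sum_minNormSymmSolution_mul {B : Matrix ι ι ℝ} (hB : B.IsSymm) (hBν : B *ᵥ ν = t) :
    ∑ i, ∑ j, minNormSymmSolution ν t i j * B i j = 2 * (t ⬝ᵥ t) - (t ⬝ᵥ ν) ^ 2 := by
  have hνBt : ν ⬝ᵥ B *ᵥ t = t ⬝ᵥ t := by
    rw [dotProduct_mulVec, ← mulVec_transpose, hB.eq, hBν]
  simp only [minNormSymmSolution, sub_apply, add_apply, smul_apply, smul_eq_mul, add_mul, sub_mul,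
    Finset.sum_add_distrib, Finset.sum_sub_distrib, mul_assoc, ← Finset.mul_sum,
    sum_sum_vecMulVec_mul, hBν, hνBt, dotProduct_comm ν t]
  ring

lemma sum_sum_sq_minNormSymmSolution (hν : ν ⬝ᵥ ν = 1) :
    ∑ i, ∑ j, minNormSymmSolution ν t i j ^ 2 = 2 * (t ⬝ᵥ t) - (t ⬝ᵥ ν) ^ 2 := by
  simpa only [sq] using sum_sum_minNormSymmSolution_mul (isSymm_minNormSymmSolution ν t)
    (minNormSymmSolution_mulVec hν)

lemma le_sum_sum_sq_of_isSymm {σ : Matrix ι ι ℝ} (hν : ν ⬝ᵥ ν = 1) (hσ : σ.IsSymm)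
    (hσν : σ *ᵥ ν = t) : 2 * (t ⬝ᵥ t) - (t ⬝ᵥ ν) ^ 2 ≤ ∑ i, ∑ j, σ i j ^ 2 := by
  have hexpand := sum_sum_sq_sub σ (minNormSymmSolution ν t)
  rw [sum_sum_minNormSymmSolution_mul hσ hσν, sum_sum_sq_minNormSymmSolution hν] at hexpand
  have : 0 ≤ ∑ i, ∑ j, (σ i j - minNormSymmSolution ν t i j) ^ 2 := by positivity
  linarith

lemma isLeast_sqrt_sum_sum_sq_of_isSymm (hν : ν ⬝ᵥ ν = 1) :
    IsLeast {s | ∃ σ : Matrix ι ι ℝ, σ.IsSymm ∧ σ *ᵥ ν = t ∧ s = √(∑ i, ∑ j, σ i j ^ 2)}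
      √(2 * (t ⬝ᵥ t) - (t ⬝ᵥ ν) ^ 2) := by
  refine ⟨⟨_, isSymm_minNormSymmSolution ν t, minNormSymmSolution_mulVec hν, ?_⟩, ?_⟩
  · rw [sum_sum_sq_minNormSymmSolution hν]
  · rintro s ⟨σ, hσ, hσν, rfl⟩
    exact Real.sqrt_le_sqrt (le_sum_sum_sq_of_isSymm hν hσ hσν)

lemma exists_dotProduct_self_eq_one_and_dotProduct_eq_zero (hι : 1 < Fintype.card ι)
    (ν : ι → ℝ) : ∃ t : ι → ℝ, t ⬝ᵥ t = 1 ∧ t ⬝ᵥ ν = 0 := by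
  have hker : LinearMap.ker (dotProductBilin ℝ ℝ |>.flip ν) ≠ ⊥ := by
    apply LinearMap.ker_ne_bot_of_finrank_lt
    simpa using hι
  obtain ⟨u, huν, hu0⟩ := Submodule.exists_mem_ne_zero_of_ne_bot hker
  have huu : 0 < u ⬝ᵥ u :=
    lt_of_le_of_ne (Finset.sum_nonneg fun i _ => mul_self_nonneg (u i))
      (Ne.symm (dotProduct_self_eq_zero.not.mpr hu0))
  refine ⟨(√(u ⬝ᵥ u))⁻¹ • u, ?_, ?_⟩
  · rw [smul_dotProduct, dotProduct_smul, smul_eq_mul, smul_eq_mul, ← mul_assoc, ← mul_inv,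
      Real.mul_self_sqrt huu.le, inv_mul_cancel₀ huu.ne']
  · rw [smul_dotProduct, show u ⬝ᵥ ν = 0 from huν, smul_zero]

end Matrix

/-- Let `ν ∈ ℝ³` be a fixed unit vector, and for each unit vector `t` let
`m(t) = inf { |σ|_F : σ symmetric 3×3, σν = t }`.  Then `sup_{|t|=1} m(t) = √2`, the
supremum being attained; in particular `m(t) = √2` whenever `t ⟂ ν`. -/
theorem stmt13 (ν : Fin 3 → ℝ) (hν : ∑ i, ν i ^ 2 = 1)
    (m : (Fin 3 → ℝ) → ℝ)
    (hm : ∀ t, m t = sInf {s | ∃ σ : Matrix (Fin 3) (Fin 3) ℝ, σ.IsSymm ∧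
        σ.mulVec ν = t ∧ s = Real.sqrt (∑ i, ∑ j, σ i j ^ 2)}) :
    IsGreatest {r | ∃ t : Fin 3 → ℝ, (∑ i, t i ^ 2) = 1 ∧ r = m t} (Real.sqrt 2) ∧
    ∀ t : Fin 3 → ℝ, (∑ i, t i ^ 2) = 1 → (∑ i, t i * ν i) = 0 → m t = Real.sqrt 2 := by
  rw [sum_sq_eq_dotProduct_self] at hν
  have hm_unit : ∀ t, ∑ i, t i ^ 2 = 1 → m t = √(2 - (t ⬝ᵥ ν) ^ 2) := fun t ht => by
    rw [hm, (isLeast_sqrt_sum_sum_sq_of_isSymm hν).csInf_eq, ← sum_sq_eq_dotProduct_self, ht,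
      mul_one]
  have hm_perp : ∀ t, ∑ i, t i ^ 2 = 1 → t ⬝ᵥ ν = 0 → m t = √2 := fun t ht htν => by
    rw [hm_unit t ht, htν, zero_pow two_ne_zero, sub_zero]
  refine ⟨⟨?_, ?_⟩, hm_perp⟩
  · obtain ⟨t, htt, htν⟩ := exists_dotProduct_self_eq_one_and_dotProduct_eq_zero (by simp) ν
    rw [← sum_sq_eq_dotProduct_self] at htt
    exact ⟨t, htt, (hm_perp t htt htν).symm⟩
  · rintro r ⟨t, ht, rfl⟩
    rw [hm_unit t ht]
    exact Real.sqrt_le_sqrt (sub_le_self _ (sq_nonneg _))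
end
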